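/- Let Ã := A − diag(Σ_{i=1}^m a_{i1}, …, Σ_{i=1}^m a_{im}). Then there exists ȳ ∈ (0,∞)^m with Ãȳ = 0, and every nonzero y ∈ [0,∞)^m with Ãy = 0 is of the form y = κȳ for some κ > 0; that is, ([0,∞)^m ∖ {0}) ∩ ker Ã = {κȳ : κ > 0}. -/
import Mathlib

open Matrix Finset

section aux
variable {m : ℕ} (A : Matrix (Fin m) (Fin m) ℝ)

private noncomputable def Atil (A : Matrix (Fin m) (Fin m) ℝ) : Matrix (Fin m) (Fin m) ℝ :=
  A - Matrix.diagonal fun j => ∑ i, A i j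

private lemma colsum (j : Fin m) : ∑ i, Atil A i j = 0 := by
  simp [Atil, Matrix.sub_apply, Finset.sum_sub_distrib, Matrix.diagonal_apply]

private lemma mulVec_apply (y : Fin m → ℝ) (i : Fin m) :
    (Atil A).mulVec y i = ∑ j, A i j * y j - (∑ k, A k i) * y i := by
  simp only [Atil, Matrix.sub_mulVec, Pi.sub_apply, Matrix.mulVec_diagonal]
  simp [Matrix.mulVec, dotProduct]

private lemma ker_eq (y : Fin m → ℝ) (h : (Atil A).mulVec y = 0) (i : Fin m) :
    ∑ j, A i j * y j = (∑ k, A k i) * y i := by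
  have := congrFun h i
  rw [mulVec_apply] at this
  simpa [sub_eq_zero] using this

private lemma pos_of_ker (hAnn : ∀ i j, 0 ≤ A i j)
    (hAirr : ∀ i j, 0 < ((1 + A) ^ (m - 1)) i j)
    (y : Fin m → ℝ) (hy : ∀ i, 0 ≤ y i) (hyne : y ≠ 0)
    (hker : (Atil A).mulVec y = 0) : ∀ i, 0 < y i := by
  have hA0 : ∀ k j, y k = 0 → y j ≠ 0 → A k j = 0 := by
    intro k j hk hj
    have h1 : ∑ j, A k j * y j = 0 := by rw [ker_eq A y hker k, hk, mul_zero]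
    have h2 : ∀ l ∈ Finset.univ, 0 ≤ A k l * y l := fun l _ =>
      mul_nonneg (hAnn k l) (hy l)
    have h3 := (Finset.sum_eq_zero_iff_of_nonneg h2).mp h1 j (Finset.mem_univ j)
    rcases mul_eq_zero.mp h3 with h | h
    · exact h
    · exact absurd h hj
  have main : ∀ n (i j : Fin m), y i = 0 → y j ≠ 0 →
      (((1 + A : Matrix (Fin m) (Fin m) ℝ)) ^ n) i j = 0 := by
    intro n
    induction n with
    | zero =>
      intro i j hi hj
      have hij : i ≠ j := by rintro rfl; exact hj hi
      simp [Matrix.one_apply, hij]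
    | succ n ih =>
      intro i j hi hj
      rw [pow_succ, Matrix.mul_apply]
      apply Finset.sum_eq_zero
      intro k _
      by_cases hk : y k = 0
      · have hkj : k ≠ j := by rintro rfl; exact hj hk
        have : (1 + A) k j = 0 := by
          simp [Matrix.add_apply, Matrix.one_apply, hkj, hA0 k j hk hj]
        rw [this, mul_zero]
      · rw [ih i k hi hk, zero_mul]
  intro i
  rcases lt_or_eq_of_le (hy i) with h | h
  · exact h
  · exfalso
    obtain ⟨j, hj⟩ := Function.ne_iff.mp hyne
    exact absurd (main (m - 1) i j h.symm hj) (ne_of_gt (hAirr i j))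

private lemma abs_ker (hAnn : ∀ i j, 0 ≤ A i j) (y : Fin m → ℝ)
    (hker : (Atil A).mulVec y = 0) :
    (Atil A).mulVec (fun i => |y i|) = 0 := by
  have hnn : ∀ i, 0 ≤ (Atil A).mulVec (fun i => |y i|) i := by
    intro i
    rw [mulVec_apply]
    have hs : 0 ≤ ∑ k, A k i := Finset.sum_nonneg fun k _ => hAnn k i
    have h1 : (∑ k, A k i) * |y i| = |(∑ k, A k i) * y i| := by
      rw [abs_mul, abs_of_nonneg hs]
    rw [sub_nonneg, h1, ← ker_eq A y hker i]
    calc |∑ j, A i j * y j| ≤ ∑ j, |A i j * y j| := Finset.abs_sum_le_sum_abs _ _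
      _ = ∑ j, A i j * |y j| := by
          refine Finset.sum_congr rfl fun j _ => ?_
          rw [abs_mul, abs_of_nonneg (hAnn i j)]
  have hsum : ∑ i, (Atil A).mulVec (fun i => |y i|) i = 0 := by
    have : ∀ i, (Atil A).mulVec (fun i => |y i|) i = ∑ j, Atil A i j * |y j| := by
      intro i; simp [Matrix.mulVec, dotProduct]
    simp_rw [this]
    rw [Finset.sum_comm]
    refine Finset.sum_eq_zero fun j _ => ?_
    rw [← Finset.sum_mul, colsum A j, zero_mul]
  funext i
  exact (Finset.sum_eq_zero_iff_of_nonneg (fun i _ => hnn i)).mp hsum i (Finset.mem_univ i)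

end aux

theorem stmt_9
    (m : ℕ) (hm : 0 < m)
    (A : Matrix (Fin m) (Fin m) ℝ)
    (hAnn : ∀ i j, 0 ≤ A i j)
    (hAirr : ∀ i j, 0 < ((1 + A) ^ (m - 1)) i j)
    :
    ∃ ybar : Fin m → ℝ, (∀ i, 0 < ybar i) ∧
      (A - Matrix.diagonal fun j => ∑ i, A i j).mulVec ybar = 0 ∧
      {y : Fin m → ℝ | (∀ i, 0 ≤ y i) ∧ y ≠ 0 ∧
          (A - Matrix.diagonal fun j => ∑ i, A i j).mulVec y = 0}
        = {y : Fin m → ℝ | ∃ κ : ℝ, 0 < κ ∧ y = κ • ybar} := by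
  have hne : Nonempty (Fin m) := ⟨⟨0, hm⟩⟩
  -- existence of a nonzero kernel vector
  have hdet : (Atil A).det = 0 := by
    have h1 : (Atil A)ᵀ.mulVec 1 = 0 := by
      funext j
      simpa [Matrix.mulVec, dotProduct, Matrix.transpose_apply] using colsum A j
    have hone : (1 : Fin m → ℝ) ≠ 0 := by
      intro h
      exact one_ne_zero (congrFun h ⟨0, hm⟩)
    have := Matrix.exists_mulVec_eq_zero_iff.mp ⟨1, hone, h1⟩
    rwa [Matrix.det_transpose] at this
  obtain ⟨v, hvne, hv⟩ := Matrix.exists_mulVec_eq_zero_iff.mpr hdet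
  set ybar : Fin m → ℝ := fun i => |v i| with hybar
  have hybarne : ybar ≠ 0 := by
    intro h
    apply hvne
    funext i
    have := congrFun h i
    simpa [hybar, abs_eq_zero] using this
  have hybarker : (Atil A).mulVec ybar = 0 := abs_ker A hAnn v hv
  have hybarnn : ∀ i, 0 ≤ ybar i := fun i => abs_nonneg _
  have hybarpos : ∀ i, 0 < ybar i := pos_of_ker A hAnn hAirr ybar hybarnn hybarne hybarker
  refine ⟨ybar, hybarpos, hybarker, ?_⟩
  ext y
  simp only [Set.mem_setOf_eq]
  constructor
  · rintro ⟨hynn, hyne, hyker⟩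
    have hyker' : (Atil A).mulVec y = 0 := hyker
    have hypos : ∀ i, 0 < y i := pos_of_ker A hAnn hAirr y hynn hyne hyker'
    obtain ⟨i0, _, hmin⟩ := Finset.exists_min_image Finset.univ
      (fun i => y i / ybar i) Finset.univ_nonempty
    set κ : ℝ := y i0 / ybar i0 with hκdef
    have hκpos : 0 < κ := div_pos (hypos i0) (hybarpos i0)
    set z : Fin m → ℝ := y - κ • ybar with hz
    have hzker : (Atil A).mulVec z = 0 := by
      rw [hz, Matrix.mulVec_sub, Matrix.mulVec_smul, hyker', hybarker, smul_zero, sub_zero]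
    have hznn : ∀ i, 0 ≤ z i := by
      intro i
      have h1 : κ ≤ y i / ybar i := hmin i (Finset.mem_univ i)
      have h2 : κ * ybar i ≤ y i := by
        rw [← le_div_iff₀ (hybarpos i)]; exact h1
      simpa [hz, sub_nonneg] using h2
    have hzi0 : z i0 = 0 := by
      simp only [hz, Pi.sub_apply, Pi.smul_apply, smul_eq_mul, hκdef]
      rw [div_mul_cancel₀ _ (ne_of_gt (hybarpos i0))]
      ring
    have hzzero : z = 0 := by
      by_contra hzne
      exact absurd hzi0 (ne_of_gt (pos_of_ker A hAnn hAirr z hznn hzne hzker i0))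
    refine ⟨κ, hκpos, ?_⟩
    have := sub_eq_zero.mp hzzero
    exact this
  · rintro ⟨κ, hκpos, rfl⟩
    refine ⟨fun i => le_of_lt (mul_pos hκpos (hybarpos i)), ?_, ?_⟩
    · intro h
      have := congrFun h ⟨0, hm⟩
      simp only [Pi.smul_apply, smul_eq_mul, Pi.zero_apply] at this
      exact absurd this (ne_of_gt (mul_pos hκpos (hybarpos ⟨0, hm⟩)))
    · show (Atil A).mulVec (κ • ybar) = 0
      rw [Matrix.mulVec_smul, hybarker, smul_zero]
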